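/- Let V₁, V₂ be smooth real-valued functions on ℝ, and set p_j(x,ξ) := ξ² + V_j(x) with Hamiltonian derivation (H_{p_j} f)(x,ξ) := 2ξ ∂_x f(x,ξ) − V_j'(x) ∂_ξ f(x,ξ). Then for every integer m ≥ 1 there exist smooth real-valued functions β_{j,k,m} on ℝ (for 0 ≤ j ≤ m−1 and 0 ≤ k ≤ m−1) such that for all (x,ξ) ∈ ℝ²: (H_{p₁}^m p₂)(x,ξ) = 2^m (V₂^{(m)}(x) − V₁^{(m)}(x)) ξ^m + Σ_{k=0}^{m−1} α_{k,m}(x) ξ^k, where α_{k,m}(x) = Σ_{j=0}^{m−1} (V₂^{(j)}(x) − V₁^{(j)}(x)) β_{j,k,m}(x). -/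

import Mathlib

open Set

/-- The Hamiltonian derivation `H_p` associated with `p(x,ξ) = ξ² + V(x)`,
acting on (curried) functions on phase space:
`(H_p f)(x,ξ) = 2ξ ∂ₓf(x,ξ) − V'(x) ∂_ξ f(x,ξ)`. -/
noncomputable def Ham (V : ℝ → ℝ) (f : ℝ → ℝ → ℝ) : ℝ → ℝ → ℝ :=
  fun x ξ => 2 * ξ * deriv (fun x' => f x' ξ) x - deriv V x * deriv (fun ξ' => f x ξ') ξ

namespace Stmt3Aux

/-- `W j = V₂^{(j)} - V₁^{(j)}`. -/
noncomputable def W (V₁ V₂ : ℝ → ℝ) (j : ℕ) (x : ℝ) : ℝ :=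
  iteratedDeriv j V₂ x - iteratedDeriv j V₁ x

lemma one_le_inf : ((⊤ : ℕ∞) : WithTop ℕ∞) ≠ 0 := by
  simp

lemma smooth_iteratedDeriv {V : ℝ → ℝ} (hV : ContDiff ℝ (⊤ : ℕ∞) V) (j : ℕ) :
    ContDiff ℝ (⊤ : ℕ∞) (iteratedDeriv j V) := by
  rw [iteratedDeriv_eq_iterate]
  exact ContDiff.iterate_deriv j hV

lemma smooth_W {V₁ V₂ : ℝ → ℝ} (hV₁ : ContDiff ℝ (⊤ : ℕ∞) V₁)
    (hV₂ : ContDiff ℝ (⊤ : ℕ∞) V₂) (j : ℕ) :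
    ContDiff ℝ (⊤ : ℕ∞) (W V₁ V₂ j) :=
  (smooth_iteratedDeriv hV₂ j).sub (smooth_iteratedDeriv hV₁ j)

lemma diffAt_W {V₁ V₂ : ℝ → ℝ} (hV₁ : ContDiff ℝ (⊤ : ℕ∞) V₁)
    (hV₂ : ContDiff ℝ (⊤ : ℕ∞) V₂) (j : ℕ) (x : ℝ) :
    DifferentiableAt ℝ (W V₁ V₂ j) x :=
  ((smooth_W hV₁ hV₂ j).differentiable one_le_inf).differentiableAt

lemma deriv_W {V₁ V₂ : ℝ → ℝ} (hV₁ : ContDiff ℝ (⊤ : ℕ∞) V₁)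
    (hV₂ : ContDiff ℝ (⊤ : ℕ∞) V₂) (j : ℕ) (x : ℝ) :
    deriv (W V₁ V₂ j) x = W V₁ V₂ (j + 1) x := by
  unfold W
  rw [deriv_fun_sub (((smooth_iteratedDeriv hV₂ j).differentiable one_le_inf).differentiableAt)
    (((smooth_iteratedDeriv hV₁ j).differentiable one_le_inf).differentiableAt),
    iteratedDeriv_succ, iteratedDeriv_succ]

/-- `f` is a combination `∑_{k<m} (∑_{j<m} W_j β_{jk}) ξ^k` with smooth `β`. -/
def Rep (V₁ V₂ : ℝ → ℝ) (m : ℕ) (f : ℝ → ℝ → ℝ) : Prop :=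
  ∃ β : ℕ → ℕ → ℝ → ℝ, (∀ j k, ContDiff ℝ (⊤ : ℕ∞) (β j k)) ∧
    ∀ x ξ : ℝ, f x ξ =
      ∑ k ∈ Finset.range m, (∑ j ∈ Finset.range m, W V₁ V₂ j x * β j k x) * ξ ^ k

namespace Rep

variable {V₁ V₂ : ℝ → ℝ} {m : ℕ}

lemma congr {f g : ℝ → ℝ → ℝ} (hf : Rep V₁ V₂ m f) (h : ∀ x ξ, f x ξ = g x ξ) :
    Rep V₁ V₂ m g := by
  obtain ⟨β, hβ, he⟩ := hf
  exact ⟨β, hβ, fun x ξ => (h x ξ) ▸ he x ξ⟩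

lemma zero : Rep V₁ V₂ m (fun _ _ => 0) :=
  ⟨fun _ _ _ => 0, fun _ _ => contDiff_const, by simp⟩

lemma add {f g : ℝ → ℝ → ℝ} (hf : Rep V₁ V₂ m f) (hg : Rep V₁ V₂ m g) :
    Rep V₁ V₂ m (fun x ξ => f x ξ + g x ξ) := by
  obtain ⟨β, hβ, he⟩ := hf
  obtain ⟨γ, hγ, hge⟩ := hg
  refine ⟨fun j k x => β j k x + γ j k x, fun j k => (hβ j k).add (hγ j k), fun x ξ => ?_⟩
  show f x ξ + g x ξ = _
  rw [he, hge]
  simp [Finset.sum_add_distrib, mul_add, add_mul]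

lemma neg {f : ℝ → ℝ → ℝ} (hf : Rep V₁ V₂ m f) : Rep V₁ V₂ m (fun x ξ => -f x ξ) := by
  obtain ⟨β, hβ, he⟩ := hf
  refine ⟨fun j k x => -β j k x, fun j k => (hβ j k).neg, fun x ξ => ?_⟩
  show -f x ξ = _
  rw [he]
  simp [Finset.sum_neg_distrib, mul_neg, neg_mul]

lemma sub {f g : ℝ → ℝ → ℝ} (hf : Rep V₁ V₂ m f) (hg : Rep V₁ V₂ m g) :
    Rep V₁ V₂ m (fun x ξ => f x ξ - g x ξ) :=
  (hf.add hg.neg).congr (fun x ξ => by ring)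

lemma sum {ι : Type*} (s : Finset ι) (f : ι → ℝ → ℝ → ℝ)
    (h : ∀ i ∈ s, Rep V₁ V₂ m (f i)) :
    Rep V₁ V₂ m (fun x ξ => ∑ i ∈ s, f i x ξ) := by
  classical
  induction s using Finset.induction with
  | empty => simpa using (zero : Rep V₁ V₂ m _)
  | @insert a s hns ih =>
    simp only [Finset.sum_insert hns]
    exact (h a (Finset.mem_insert_self a s)).add
      (ih fun i hi => h i (Finset.mem_insert_of_mem hi))

lemma atom {j k : ℕ} (hjm : j < m) (hkm : k < m) {c : ℝ → ℝ}
    (hc : ContDiff ℝ (⊤ : ℕ∞) c) :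
    Rep V₁ V₂ m (fun x ξ => W V₁ V₂ j x * c x * ξ ^ k) := by
  refine ⟨fun j' k' x => if j' = j then (if k' = k then c x else 0) else 0,
    fun j' k' => ?_, fun x ξ => ?_⟩
  · by_cases h1 : j' = j <;> by_cases h2 : k' = k <;> simp [h1, h2, hc, contDiff_const]
  · simp [mul_ite, mul_zero, ite_mul, zero_mul, Finset.sum_ite_eq',
      Finset.mem_range, hjm, hkm]

end Rep

lemma deriv_poly_x {c : ℕ → ℝ → ℝ} (hc : ∀ k, ∀ y : ℝ, DifferentiableAt ℝ (c k) y)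
    (n : ℕ) (x ξ : ℝ) :
    deriv (fun x' => ∑ k ∈ Finset.range n, c k x' * ξ ^ k) x =
      ∑ k ∈ Finset.range n, deriv (c k) x * ξ ^ k := by
  rw [deriv_fun_sum (fun k _ => (hc k x).mul_const _)]
  exact Finset.sum_congr rfl fun k _ => deriv_mul_const (hc k x) _

lemma deriv_poly_xi (c : ℕ → ℝ → ℝ) (n : ℕ) (x ξ : ℝ) :
    deriv (fun ξ' => ∑ k ∈ Finset.range n, c k x * ξ' ^ k) ξ =
      ∑ k ∈ Finset.range n, c k x * (k * ξ ^ (k - 1)) := by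
  rw [deriv_fun_sum (fun k _ => (differentiableAt_pow k).const_mul _)]
  refine Finset.sum_congr rfl fun k _ => ?_
  rw [deriv_const_mul _ (differentiableAt_pow k), deriv_pow_field]

lemma main {V₁ V₂ : ℝ → ℝ} (hV₁ : ContDiff ℝ (⊤ : ℕ∞) V₁)
    (hV₂ : ContDiff ℝ (⊤ : ℕ∞) V₂) :
    ∀ m : ℕ, 1 ≤ m → ∃ r : ℝ → ℝ → ℝ, Rep V₁ V₂ m r ∧
      ∀ x ξ : ℝ, (Ham V₁)^[m] (fun x' ξ' => ξ' ^ 2 + V₂ x') x ξ =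
        2 ^ m * W V₁ V₂ m x * ξ ^ m + r x ξ := by
  intro m hm
  induction m, hm using Nat.le_induction with
  | base =>
    refine ⟨fun _ _ => 0, Rep.zero, fun x ξ => ?_⟩
    simp only [Function.iterate_one, Ham]
    rw [deriv_const_add, deriv_add_const, deriv_pow_field]
    simp only [W, iteratedDeriv_one]
    ring
  | succ m hm ih =>
    obtain ⟨r, ⟨β, hβ, hrep⟩, hF⟩ := ih
    -- smoothness of auxiliary data
    have hβ' : ∀ j k, ContDiff ℝ (⊤ : ℕ∞) (deriv (β j k)) := fun j k =>
      (contDiff_infty_iff_deriv.mp (hβ j k)).2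
    have hβd : ∀ j k, ∀ y : ℝ, DifferentiableAt ℝ (β j k) y := fun j k y =>
      (((hβ j k)).differentiable one_le_inf).differentiableAt
    set c : ℕ → ℝ → ℝ := fun k x =>
      if k = m then 2 ^ m * W V₁ V₂ m x
      else ∑ j ∈ Finset.range m, W V₁ V₂ j x * β j k x with hc_def
    have hc_smooth : ∀ k, ContDiff ℝ (⊤ : ℕ∞) (c k) := by
      intro k
      by_cases h : k = m
      · simpa [hc_def, h] using contDiff_const.mul (smooth_W hV₁ hV₂ m)
      · simp only [hc_def, h, if_false]
        exact ContDiff.sum fun j _ => (smooth_W hV₁ hV₂ j).mul (hβ j k)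
    have hc_diff : ∀ k, ∀ y : ℝ, DifferentiableAt ℝ (c k) y := fun k y =>
      ((hc_smooth k).differentiable one_le_inf).differentiableAt
    -- the representation of the m-th iterate as a polynomial in ξ
    have hfun : (Ham V₁)^[m] (fun x' ξ' => ξ' ^ 2 + V₂ x') =
        fun x ξ => ∑ k ∈ Finset.range (m + 1), c k x * ξ ^ k := by
      funext x ξ
      rw [hF x ξ, hrep x ξ, Finset.sum_range_succ]
      have h1 : c m x * ξ ^ m = 2 ^ m * W V₁ V₂ m x * ξ ^ m := by
        simp [hc_def]
      have h2 : ∀ k ∈ Finset.range m, c k x * ξ ^ k =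
          (∑ j ∈ Finset.range m, W V₁ V₂ j x * β j k x) * ξ ^ k := by
        intro k hk
        simp [hc_def, Nat.ne_of_lt (Finset.mem_range.mp hk)]
      rw [h1, Finset.sum_congr rfl h2]
      ring
    -- derivative of c m
    have hderiv_cm : ∀ x : ℝ, deriv (c m) x = 2 ^ m * W V₁ V₂ (m + 1) x := by
      intro x
      have : c m = fun x => 2 ^ m * W V₁ V₂ m x := by funext y; simp [hc_def]
      rw [this, deriv_const_mul _ (diffAt_W hV₁ hV₂ m x), deriv_W hV₁ hV₂]
    -- derivative of c k for k < m
    have hderiv_ck : ∀ k < m, ∀ x : ℝ, deriv (c k) x =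
        ∑ j ∈ Finset.range m,
          (W V₁ V₂ (j + 1) x * β j k x + W V₁ V₂ j x * deriv (β j k) x) := by
      intro k hk x
      have : c k = fun x => ∑ j ∈ Finset.range m, W V₁ V₂ j x * β j k x := by
        funext y; simp [hc_def, Nat.ne_of_lt hk]
      rw [this, deriv_fun_sum (A := fun j y => W V₁ V₂ j y * β j k y)
        (fun j _ => (diffAt_W hV₁ hV₂ j x).mul (hβd j k x))]
      refine Finset.sum_congr rfl fun j _ => ?_
      rw [deriv_fun_mul (diffAt_W hV₁ hV₂ j x) (hβd j k x), deriv_W hV₁ hV₂]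
    -- the remainder at level m+1
    set r' : ℝ → ℝ → ℝ := fun x ξ =>
      (∑ k ∈ Finset.range m, 2 * deriv (c k) x * ξ ^ (k + 1)) -
      (∑ k ∈ Finset.range (m + 1), deriv V₁ x * (c k x * (k * ξ ^ (k - 1)))) with hr'_def
    have hrep' : Rep V₁ V₂ (m + 1) r' := by
      refine Rep.sub (Rep.sum _ _ fun k hk => ?_) (Rep.sum _ _ fun k hk => ?_)
      · -- 2 * deriv (c k) * ξ^(k+1), k < m
        have hk' := Finset.mem_range.mp hk
        refine (Rep.sum (Finset.range m)
          (fun j x ξ => W V₁ V₂ (j + 1) x * (2 * β j k x) * ξ ^ (k + 1) +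
            W V₁ V₂ j x * (2 * deriv (β j k) x) * ξ ^ (k + 1)) fun j hj => ?_).congr
          (fun x ξ => ?_)
        · have hj' := Finset.mem_range.mp hj
          exact (Rep.atom (Nat.succ_lt_succ hj')
            (Nat.succ_lt_succ hk') (contDiff_const.mul (hβ j k))).add
            (Rep.atom (Nat.lt_succ_of_lt hj')
            (Nat.succ_lt_succ hk') (contDiff_const.mul (hβ' j k)))
        · rw [hderiv_ck k hk' x]
          simp only [Finset.mul_sum, Finset.sum_mul]
          exact Finset.sum_congr rfl fun j _ => by ring
      · -- deriv V₁ * c k * k ξ^(k-1), k < m+1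
        have hV₁' : ContDiff ℝ (⊤ : ℕ∞) (deriv V₁) := (contDiff_infty_iff_deriv.mp hV₁).2
        rcases Nat.lt_succ_iff_lt_or_eq.mp (Finset.mem_range.mp hk) with hk' | hk'
        · refine (Rep.sum (Finset.range m)
            (fun j x ξ => W V₁ V₂ j x * ((k : ℝ) * deriv V₁ x * β j k x) * ξ ^ (k - 1))
            fun j hj => ?_).congr (fun x ξ => ?_)
          · exact Rep.atom (Nat.lt_succ_of_lt (Finset.mem_range.mp hj))
              (lt_of_le_of_lt (Nat.sub_le k 1) (Nat.lt_succ_of_lt hk'))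
              ((contDiff_const.mul hV₁').mul (hβ j k))
          · have : c k x = ∑ j ∈ Finset.range m, W V₁ V₂ j x * β j k x := by
              simp [hc_def, Nat.ne_of_lt hk']
            rw [this]
            simp only [Finset.mul_sum, Finset.sum_mul]
            exact Finset.sum_congr rfl fun j _ => by ring
        · refine (Rep.atom (j := m) (k := k - 1) (Nat.lt_succ_self m)
            (lt_of_le_of_lt (Nat.sub_le k 1) (Finset.mem_range.mp hk))
            (c := fun x => 2 ^ m * (k : ℝ) * deriv V₁ x)
            (contDiff_const.mul hV₁')).congr (fun x ξ => ?_)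
          have hcm : c k x = 2 ^ m * W V₁ V₂ m x := by simp [hc_def, hk']
          rw [hcm]
          ring
    refine ⟨r', hrep', fun x ξ => ?_⟩
    rw [Function.iterate_succ_apply', hfun]
    show 2 * ξ * deriv (fun x' => ∑ k ∈ Finset.range (m + 1), c k x' * ξ ^ k) x -
        deriv V₁ x * deriv (fun ξ' => ∑ k ∈ Finset.range (m + 1), c k x * ξ' ^ k) ξ = _
    rw [deriv_poly_x hc_diff, deriv_poly_xi]
    rw [hr'_def]
    simp only []
    rw [Finset.mul_sum]
    have hsplit : ∑ k ∈ Finset.range (m + 1), 2 * ξ * (deriv (c k) x * ξ ^ k) =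
        (∑ k ∈ Finset.range m, 2 * deriv (c k) x * ξ ^ (k + 1)) +
          2 * deriv (c m) x * ξ ^ (m + 1) := by
      rw [Finset.sum_range_succ]
      congr 1
      · exact Finset.sum_congr rfl fun k _ => by ring
      · ring
    rw [hsplit, hderiv_cm x, Finset.mul_sum]
    ring

end Stmt3Aux

/-- Structure of the iterated Hamiltonian derivative `H_{p₁}^m p₂`:
`(H_{p₁}^m p₂)(x,ξ) = 2^m (V₂^{(m)}(x) − V₁^{(m)}(x)) ξ^m + Σ_{k<m} α_{k,m}(x) ξ^k` with
`α_{k,m} = Σ_{j<m} (V₂^{(j)} − V₁^{(j)}) β_{j,k,m}` for smooth functions `β_{j,k,m}`. -/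
theorem stmt_3 (V₁ V₂ : ℝ → ℝ)
    (hV₁ : ContDiff ℝ (⊤ : ℕ∞) V₁) (hV₂ : ContDiff ℝ (⊤ : ℕ∞) V₂)
    (m : ℕ) (hm : 1 ≤ m) :
    ∃ β : Fin m → Fin m → ℝ → ℝ,
      (∀ j k, ContDiff ℝ (⊤ : ℕ∞) (β j k)) ∧
      ∀ x ξ : ℝ,
        (Ham V₁)^[m] (fun x' ξ' => ξ' ^ 2 + V₂ x') x ξ =
          2 ^ m * (iteratedDeriv m V₂ x - iteratedDeriv m V₁ x) * ξ ^ m +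
          ∑ k : Fin m,
            (∑ j : Fin m,
              (iteratedDeriv (j : ℕ) V₂ x - iteratedDeriv (j : ℕ) V₁ x) * β j k x) *
            ξ ^ (k : ℕ) := by
  obtain ⟨r, ⟨β, hβ, hrep⟩, hF⟩ := Stmt3Aux.main hV₁ hV₂ m hm
  refine ⟨fun j k => β j k, fun j k => hβ j k, fun x ξ => ?_⟩
  rw [hF x ξ, hrep x ξ]
  have h1 : ∀ k : ℕ, (∑ j : Fin m,
      (iteratedDeriv (j : ℕ) V₂ x - iteratedDeriv (j : ℕ) V₁ x) * β j k x) =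
      ∑ j ∈ Finset.range m, (iteratedDeriv j V₂ x - iteratedDeriv j V₁ x) * β j k x :=
    fun k => Fin.sum_univ_eq_sum_range
      (fun j => (iteratedDeriv j V₂ x - iteratedDeriv j V₁ x) * β j k x) m
  simp only [h1]
  rw [Fin.sum_univ_eq_sum_range
    (fun k => (∑ j ∈ Finset.range m,
      (iteratedDeriv j V₂ x - iteratedDeriv j V₁ x) * β j k x) * ξ ^ k) m]
  rfl
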